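/- Let $\varphi$ be a map whose branches $\zeta$ are diffeomorphisms with bounded distortion, such that $|\{x : |\varphi'(x)| > e^t\}| < Ce^{-\alpha t}$ for all $t > 0$, with $C > 0$ and $\alpha \in (0,1)$. Then there is a constant $C'$ (depending on $C$ and the distortion bound $C_1$, where $\sup|\zeta'| \leq e^{C_1}\inf|\zeta'|$ on each branch) such that for every $n \geq 1$, the number $N$ of branches $\zeta$ with $\inf |\zeta'| \in [e^n, e^{n+1}]$ satisfies $N \leq C' e^{n(1 - \alpha)}$. -/

import Mathlib

open MeasureTheory Set Function
open scoped ENNReal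

/-!
Each branch `D i`, `i ∈ s`, has `e^n ≤ |φ'| ≤ e^(C₁+n+1)` by bounded distortion, so it lies in the
tail set `{|φ'| > e^(n-1/2)}`, and since `φ` maps it onto `X`, it has measure at least
`e^-(C₁+n+1)`. Disjointness then gives `#s · e^-(C₁+n+1) ≤ C e^(-α(n-1/2))`.

The branch domains need not be measurable, so their outer measures need not add up. Instead the
union of the branches is cut into countably many measurable pieces on which `φ` is injective
(possible since `φ' ≠ 0` there). Every point of `X` then has `#s` preimages lying in distinct
pieces, and integrating this multiplicity bounds `#s · |X|` by
`∑ |φ(piece)| ≤ e^(C₁+n+1) · |⋃ D i|`.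
-/

theorem tsum_measure_inter_le {α : Type*} [MeasurableSpace α] (μ : Measure α) (s : Set α)
    {t : ℕ → Set α} (hd : Pairwise (Disjoint on t)) (ht : ∀ n, MeasurableSet (t n)) :
    ∑' n, μ (s ∩ t n) ≤ μ s :=
  calc ∑' n, μ (s ∩ t n) = ∑' n, μ.restrict s (t n) := by
        simp only [Measure.restrict_apply (ht _), inter_comm]
    _ = μ.restrict s (⋃ n, t n) := (measure_iUnion hd ht).symm
    _ ≤ μ.restrict s univ := measure_mono (subset_univ _)
    _ = μ s := Measure.restrict_apply_univ s

theorem volume_image_le_of_abs_deriv_le {f : ℝ → ℝ} {s : Set ℝ} {K : ℝ}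
    (hf : ∀ x ∈ s, DifferentiableAt ℝ f x) (hK : ∀ x ∈ s, |deriv f x| ≤ K) :
    volume (f '' s) ≤ ENNReal.ofReal K * volume s := by
  -- a measurable hull of `s` inside the region where the derivative bound holds
  set W := toMeasurable volume s ∩ {x | DifferentiableAt ℝ f x ∧ |deriv f x| ≤ K}
  have hW : MeasurableSet W := (measurableSet_toMeasurable _ _).inter
    ((measurableSet_of_differentiableAt ℝ f).inter
      (measurableSet_le (measurable_deriv f).abs measurable_const))
  have hsW : s ⊆ W := fun x hx => ⟨subset_toMeasurable _ _ hx, hf x hx, hK x hx⟩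
  calc volume (f '' s) ≤ volume (f '' W) := measure_mono (image_mono hsW)
    _ ≤ ∫⁻ x in W, ENNReal.ofReal |(ContinuousLinearMap.toSpanSingleton ℝ (deriv f x)).det| :=
        addHaar_image_le_lintegral_abs_det_fderiv volume hW
          fun x hx => hx.2.1.hasDerivAt.hasFDerivAt.hasFDerivWithinAt
    _ ≤ ∫⁻ _ in W, ENNReal.ofReal K := by
        refine setLIntegral_mono measurable_const fun x hx => ?_
        rw [ContinuousLinearMap.det_toSpanSingleton]
        exact ENNReal.ofReal_le_ofReal hx.2.2
    _ = ENNReal.ofReal K * volume W := setLIntegral_const _ _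
    _ ≤ ENNReal.ofReal K * volume s := by
        rw [← measure_toMeasurable s]
        gcongr
        exact inter_subset_left

theorem exists_measurable_partition_injOn {f : ℝ → ℝ} {s : Set ℝ}
    (hf : ∀ x ∈ s, DifferentiableAt ℝ f x) (hf0 : ∀ x ∈ s, deriv f x ≠ 0) :
    ∃ t : ℕ → Set ℝ, Pairwise (Disjoint on t) ∧ (∀ n, MeasurableSet (t n)) ∧
      s ⊆ ⋃ n, t n ∧ ∀ n, InjOn f (s ∩ t n) := by
  classical
  -- an error below `‖A‖` in the linear approximation by `A ≠ 0` forces injectivity;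
  -- the value at `A = 0` only serves to keep the error positive
  obtain ⟨t, A, hd, ht, hst, happrox, hA⟩ :=
    exists_partition_approximatesLinearOn_of_hasFDerivWithinAt f s (fderiv ℝ f)
      (fun x hx => (hf x hx).hasFDerivAt.hasFDerivWithinAt)
      (fun A => if A = 0 then 1 else ‖A‖₊ / 2) (fun A => by split_ifs with h <;> simp [h])
  refine ⟨t, hd, ht, hst, fun n => ?_⟩
  rcases s.eq_empty_or_nonempty with rfl | hs
  · simp
  obtain ⟨y, hy, hAy⟩ := hA hs n
  have hAn : A n = ContinuousLinearMap.toSpanSingleton ℝ (deriv f y) :=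
    hAy.trans (hf y hy).hasDerivAt.hasFDerivAt.fderiv
  have hA0 : A n ≠ 0 := fun h => hf0 y hy (by simpa [hAn] using congrArg (· 1) h)
  intro x hx x' hx' hfx
  have h := happrox n x hx x' hx'
  rw [if_neg hA0, hAn] at h
  simp only [hfx, sub_self, zero_sub, norm_neg, ContinuousLinearMap.toSpanSingleton_apply,
    norm_smul, ContinuousLinearMap.nnnorm_toSpanSingleton] at h
  have hpos : 0 < ‖deriv f y‖ := norm_pos_iff.2 (hf0 y hy)
  have hxx' : ‖x - x'‖ = 0 := by push_cast at h; nlinarith [norm_nonneg (x - x')]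
  exact sub_eq_zero.1 (norm_eq_zero.1 hxx')

theorem natCast_card_le_tsum_indicator_image {α β ι : Type*} {f : α → β} {s : Set α}
    {t : ℕ → Set α} (hst : s ⊆ ⋃ n, t n) (hinj : ∀ n, InjOn f (s ∩ t n))
    {D : ι → Set α} (hD : Pairwise (Disjoint on D)) {F : Finset ι}
    (hDs : ∀ i ∈ F, D i ⊆ s) {y : β} (hy : y ∈ ⋂ i ∈ F, f '' D i) :
    (F.card : ℝ≥0∞) ≤ ∑' n, (f '' (s ∩ t n)).indicator 1 y := by
  classical
  have hpre : ∀ i : F, ∃ x ∈ D i, f x = y := fun i => mem_iInter₂.1 hy i i.2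
  choose x hxD hfx using hpre
  have hxs : ∀ i : F, x i ∈ s := fun i => hDs i i.2 (hxD i)
  choose m hm using fun i => mem_iUnion.1 (hst (hxs i))
  have hm_inj : Injective m := by
    intro i j hij
    have hxij : x i = x j :=
      hinj (m i) ⟨hxs i, hm i⟩ ⟨hxs j, hij ▸ hm j⟩ ((hfx i).trans (hfx j).symm)
    by_contra hne
    exact (hD (Subtype.coe_injective.ne hne)).ne_of_mem (hxD i) (hxij ▸ hxD j) rfl
  have hmem : ∀ i, y ∈ f '' (s ∩ t (m i)) := fun i => ⟨x i, ⟨hxs i, hm i⟩, hfx i⟩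
  calc (F.card : ℝ≥0∞) = ∑ i : F, (f '' (s ∩ t (m i))).indicator 1 y := by
        simp [indicator_of_mem (hmem _)]
    _ = ∑ n ∈ Finset.univ.image m, (f '' (s ∩ t n)).indicator 1 y :=
        (Finset.sum_image (f := fun n => (f '' (s ∩ t n)).indicator 1 y)
          fun i _ j _ h => hm_inj h).symm
    _ ≤ ∑' n, (f '' (s ∩ t n)).indicator 1 y := ENNReal.sum_le_tsum _

theorem mul_measure_le_tsum_measure_of_le_tsum_indicator {α : Type*} [MeasurableSpace α]
    (μ : Measure α) (P : ℕ → Set α) {Y : Set α} {c : ℝ≥0∞}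
    (h : ∀ y ∈ Y, c ≤ ∑' n, (P n).indicator 1 y) :
    c * μ Y ≤ ∑' n, μ (P n) := by
  set N : α → ℝ≥0∞ := fun y => ∑' n, (toMeasurable μ (P n)).indicator 1 y
  have hN : Measurable N := Measurable.tsum fun n =>
    measurable_one.indicator (measurableSet_toMeasurable _ _)
  have hYN : Y ⊆ {y | c ≤ N y} := fun y hy => (h y hy).trans <| ENNReal.tsum_le_tsum fun n =>
    indicator_le_indicator_of_subset (subset_toMeasurable _ _) (fun _ => bot_le) y
  calc c * μ Y ≤ c * μ {y | c ≤ N y} := by gcongr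
    _ ≤ ∫⁻ y, N y ∂μ := mul_meas_ge_le_lintegral₀ hN.aemeasurable c
    _ = ∑' n, μ (toMeasurable μ (P n)) := by
        simp only [N]
        rw [lintegral_tsum fun n =>
          (measurable_one.indicator (measurableSet_toMeasurable _ _)).aemeasurable]
        simp only [lintegral_indicator_one (measurableSet_toMeasurable _ _)]
    _ = ∑' n, μ (P n) := by simp only [measure_toMeasurable]

theorem natCast_card_mul_volume_iInter_image_le {ι : Type*} {f : ℝ → ℝ} {s : Set ℝ} {K : ℝ}
    (hf : ∀ x ∈ s, DifferentiableAt ℝ f x) (hf0 : ∀ x ∈ s, deriv f x ≠ 0)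
    (hK : ∀ x ∈ s, |deriv f x| ≤ K) {D : ι → Set ℝ} (hD : Pairwise (Disjoint on D))
    {F : Finset ι} (hDs : ∀ i ∈ F, D i ⊆ s) :
    F.card * volume (⋂ i ∈ F, f '' D i) ≤ ENNReal.ofReal K * volume s := by
  obtain ⟨t, htd, htm, hst, hinj⟩ := exists_measurable_partition_injOn hf hf0
  calc (F.card : ℝ≥0∞) * volume (⋂ i ∈ F, f '' D i) ≤ ∑' n, volume (f '' (s ∩ t n)) :=
        mul_measure_le_tsum_measure_of_le_tsum_indicator _ _ fun y hy =>
          natCast_card_le_tsum_indicator_image hst hinj hD hDs hy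
    _ ≤ ∑' n, ENNReal.ofReal K * volume (s ∩ t n) := ENNReal.tsum_le_tsum fun n =>
        volume_image_le_of_abs_deriv_le (fun x hx => hf x hx.1) fun x hx => hK x hx.1
    _ = ENNReal.ofReal K * ∑' n, volume (s ∩ t n) := ENNReal.tsum_mul_left
    _ ≤ ENNReal.ofReal K * volume s := by grw [tsum_measure_inter_le _ _ htd htm]

theorem natCast_card_mul_volume_le_of_subset_image {ι : Type*} {f : ℝ → ℝ} {D : ι → Set ℝ}
    {F : Finset ι} {Y : Set ℝ} {K : ℝ} (hD : Pairwise (Disjoint on D))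
    (hY : ∀ i ∈ F, Y ⊆ f '' D i) (hf : ∀ i ∈ F, ∀ x ∈ D i, DifferentiableAt ℝ f x)
    (hf0 : ∀ i ∈ F, ∀ x ∈ D i, deriv f x ≠ 0) (hK : ∀ i ∈ F, ∀ x ∈ D i, |deriv f x| ≤ K) :
    F.card * volume Y ≤ ENNReal.ofReal K * volume (⋃ i ∈ F, D i) := by
  have hU {P : ℝ → Prop} (hP : ∀ i ∈ F, ∀ x ∈ D i, P x) : ∀ x ∈ ⋃ i ∈ F, D i, P x := by
    simp only [mem_iUnion₂]
    rintro x ⟨i, hi, hx⟩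
    exact hP i hi x hx
  calc (F.card : ℝ≥0∞) * volume Y ≤ F.card * volume (⋂ i ∈ F, f '' D i) := by
        gcongr
        exact subset_iInter₂ hY
    _ ≤ ENNReal.ofReal K * volume (⋃ i ∈ F, D i) :=
        natCast_card_mul_volume_iInter_image_le (hU hf) (hU hf0) (hU hK) hD
          fun i hi => subset_biUnion_of_mem hi

theorem le_abs_of_le_sInf_abs_image {β : Type*} {g : β → ℝ} {D : Set β} {a : ℝ} {x : β}
    (h : a ≤ sInf ((fun y => |g y|) '' D)) (hx : x ∈ D) : a ≤ |g x| :=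
  h.trans (csInf_le ⟨0, by rintro _ ⟨y, -, rfl⟩; exact abs_nonneg _⟩ ⟨x, hx, rfl⟩)

theorem abs_le_mul_sInf_abs_image {β : Type*} {g : β → ℝ} {D : Set β} {c : ℝ} {x : β}
    (hc : 0 < c) (hx : x ∈ D) (hdist : ∀ y ∈ D, |g x| ≤ c * |g y|) :
    |g x| ≤ c * sInf ((fun y => |g y|) '' D) := by
  rw [← div_le_iff₀' hc]
  exact le_csInf ⟨_, x, hx, rfl⟩ fun _ ⟨y, hy, hgy⟩ => hgy ▸ (div_le_iff₀' hc).2 (hdist y hy)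

theorem stmt_14_general (C C₁ α : ℝ) (hC : 0 < C) :
    ∃ C' : ℝ, 0 < C' ∧
      ∀ (ι : Type) (D : ι → Set ℝ) (φ : ℝ → ℝ) (X : Set ℝ),
        Pairwise (Function.onFun Disjoint D) →
        volume X = 1 →
        (∀ i, Set.BijOn φ (D i) X) →
        (∀ i, ∀ x ∈ D i, DifferentiableAt ℝ φ x) →
        (∀ i, ∀ x ∈ D i, ∀ y ∈ D i, |deriv φ x| ≤ Real.exp C₁ * |deriv φ y|) →
        (∀ t : ℝ, 0 < t →
          volume {x ∈ ⋃ i, D i | Real.exp t < |deriv φ x|}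
            < ENNReal.ofReal (C * Real.exp (-α * t))) →
        ∀ n : ℕ, 1 ≤ n →
          ∀ s : Finset ι,
            (∀ i ∈ s, sInf ((fun x => |deriv φ x|) '' D i)
              ∈ Set.Icc (Real.exp n) (Real.exp (n + 1))) →
            (s.card : ℝ) ≤ C' * Real.exp (n * (1 - α)) := by
  refine ⟨C * Real.exp (C₁ + 1 + α / 2), by positivity, ?_⟩
  intro ι D φ X hD hX hbij hdiff hdist htail n hn s hs
  have hn' : (1 : ℝ) ≤ n := by exact_mod_cast hn
  have hlow : ∀ i ∈ s, ∀ x ∈ D i, Real.exp n ≤ |deriv φ x| := fun i hi x hx =>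
    le_abs_of_le_sInf_abs_image (hs i hi).1 hx
  have hup : ∀ i ∈ s, ∀ x ∈ D i, |deriv φ x| ≤ Real.exp (C₁ + n + 1) := fun i hi x hx =>
    calc |deriv φ x| ≤ Real.exp C₁ * sInf ((fun x => |deriv φ x|) '' D i) :=
          abs_le_mul_sInf_abs_image (Real.exp_pos _) hx (hdist i x hx)
      _ ≤ Real.exp C₁ * Real.exp (n + 1) := by gcongr; exact (hs i hi).2
      _ = Real.exp (C₁ + n + 1) := by rw [← Real.exp_add, add_assoc]
  have hcard : (s.card : ℝ≥0∞) ≤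
      ENNReal.ofReal (Real.exp (C₁ + n + 1)) * volume (⋃ i ∈ s, D i) := by
    simpa [hX] using natCast_card_mul_volume_le_of_subset_image hD
      (fun i _ => (hbij i).image_eq.symm.subset) (fun i _ => hdiff i)
      (fun i hi x hx => abs_pos.1 ((Real.exp_pos _).trans_le (hlow i hi x hx))) hup
  have hU_tail : volume (⋃ i ∈ s, D i) ≤ ENNReal.ofReal (C * Real.exp (-α * (n - 1 / 2))) := by
    refine (measure_mono fun x hx => ?_).trans (htail _ (by linarith)).le
    obtain ⟨i, hi, hx⟩ := mem_iUnion₂.1 hx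
    exact ⟨mem_iUnion_of_mem i hx,
      (Real.exp_lt_exp.2 (by linarith)).trans_le (hlow i hi x hx)⟩
  calc (s.card : ℝ) ≤ Real.exp (C₁ + n + 1) * (C * Real.exp (-α * (n - 1 / 2))) := by
        rw [← ENNReal.ofReal_le_ofReal_iff (by positivity), ENNReal.ofReal_natCast,
          ENNReal.ofReal_mul (by positivity)]
        exact hcard.trans (by gcongr)
    _ = C * Real.exp (C₁ + 1 + α / 2) * Real.exp (n * (1 - α)) := by
        rw [mul_left_comm, mul_assoc, ← Real.exp_add, ← Real.exp_add]
        ring_nf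

/-- Branch counting from exponential tails: if the branches of `φ` (with pairwise
disjoint domains `D i`, each mapped bijectively onto a set `X` of measure `1`) have
distortion bounded by `C₁` and `|{|φ'| > e^t}| < C e^{-αt}` for all `t > 0`, then
the number of branches with `inf |ζ'| ∈ [e^n, e^{n+1}]` is at most `C' e^{n(1-α)}`. -/
theorem stmt_14 (C C₁ α : ℝ) (hC : 0 < C) (hC₁ : 0 < C₁) (hα0 : 0 < α) (hα1 : α < 1) :
    ∃ C' : ℝ, 0 < C' ∧
      ∀ (ι : Type) (D : ι → Set ℝ) (φ : ℝ → ℝ) (X : Set ℝ),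
        Pairwise (Function.onFun Disjoint D) →
        volume X = 1 →
        (∀ i, Set.BijOn φ (D i) X) →
        (∀ i, ∀ x ∈ D i, DifferentiableAt ℝ φ x) →
        (∀ i, ∀ x ∈ D i, ∀ y ∈ D i, |deriv φ x| ≤ Real.exp C₁ * |deriv φ y|) →
        (∀ t : ℝ, 0 < t →
          volume {x ∈ ⋃ i, D i | Real.exp t < |deriv φ x|}
            < ENNReal.ofReal (C * Real.exp (-α * t))) →
        ∀ n : ℕ, 1 ≤ n →
          ∀ s : Finset ι,
            (∀ i ∈ s, sInf ((fun x => |deriv φ x|) '' D i)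
              ∈ Set.Icc (Real.exp n) (Real.exp (n + 1))) →
            (s.card : ℝ) ≤ C' * Real.exp (n * (1 - α)) :=
  stmt_14_general C C₁ α hC
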